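/- arXiv:2209.13534 — 8 statements merged into one kernel-verified Lean document; each statement's English description precedes it below -/
import Mathlib

section
/- Let M be a comultiplication R-module and N₁, N₂ submodules of M. For the variety ν^{s*}(N) = {K ∈ Spec^L(M) : soc(K) ⊆ N}, one has ν^{s*}(N₁ + N₂) = ν^{s*}(N₁) ∪ ν^{s*}(N₂). In particular, every comultiplication module is a secondary cotop module. -/
open Pointwise

section Defs
variable (R M : Type*) [CommRing R] [AddCommGroup M] [Module R M]

/-- A submodule `S` is second if `S ≠ 0` and for every `r : R`, `r • S = S` or `r • S = 0`. -/
def IsSecond (S : Submodule R M) : Prop :=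
  S ≠ ⊥ ∧ ∀ r : R, r • S = S ∨ r • S = ⊥

/-- A submodule `K` is secondary if `K ≠ 0` and for every `r : R`,
`r • K = K` or `r ^ n • K = 0` for some `n ≥ 1`. -/
def IsSecondary (K : Submodule R M) : Prop :=
  K ≠ ⊥ ∧ ∀ r : R, r • K = K ∨ ∃ n : ℕ, 0 < n ∧ r ^ n • K = ⊥

/-- The socle of a submodule `N`: the sum of all second submodules contained in `N`. -/
def soc (N : Submodule R M) : Submodule R M :=
  sSup {S : Submodule R M | IsSecond R M S ∧ S ≤ N}

/-- The secondary-like spectrum of `M`. -/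
def SpecL : Set (Submodule R M) :=
  {K | IsSecondary R M K ∧ (soc R M K).annihilator = K.annihilator.radical}

/-- The variety `ν^s(N)`. -/
def nuS (N : Submodule R M) : Set (Submodule R M) :=
  {K | K ∈ SpecL R M ∧ N.annihilator ≤ K.annihilator.radical}

/-- The variety `ν^{s*}(N)`. -/
def nuSStar (N : Submodule R M) : Set (Submodule R M) :=
  {K | K ∈ SpecL R M ∧ soc R M K ≤ N}

end Defs

variable {R M : Type*} [CommRing R] [AddCommGroup M] [Module R M]

theorem smul_submodule_eq_bot_iff (r : R) (K : Submodule R M) :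
    r • K = ⊥ ↔ r ∈ K.annihilator := by
  rw [Submodule.mem_annihilator, eq_bot_iff]
  constructor
  · intro h m hm
    have : r • m ∈ r • K := Submodule.smul_mem_pointwise_smul m r K hm
    simpa using h this
  · intro h x hx
    obtain ⟨s, hs, rfl⟩ := Set.mem_smul_set.mp hx
    simp [h s hs]

theorem pow_smul_eq_self {r : R} {K : Submodule R M} (h : r • K = K) (n : ℕ) :
    r ^ n • K = K := by
  induction n with
  | zero => simp
  | succ n ih => rw [pow_succ, mul_smul, h, ih]

theorem radical_ann_prime {K : Submodule R M} (hK : IsSecondary R M K) :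
    K.annihilator.radical.IsPrime := by
  obtain ⟨hbot, hsec⟩ := hK
  constructor
  · intro h
    have h1 : (1 : R) ∈ K.annihilator.radical := h ▸ Submodule.mem_top
    obtain ⟨n, hn⟩ := Ideal.mem_radical_iff.mp h1
    rw [one_pow, Submodule.mem_annihilator] at hn
    refine hbot (eq_bot_iff.mpr fun m hm => ?_)
    simpa using hn m hm
  · intro a b hab
    by_contra hcon
    push_neg at hcon
    obtain ⟨ha, hb⟩ := hcon
    have hKa : a • K = K := by
      rcases hsec a with h | ⟨n, hn, h⟩
      · exact h
      · exact absurd (Ideal.mem_radical_iff.mpr ⟨n, (smul_submodule_eq_bot_iff _ K).mp h⟩) ha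
    have hKb : b • K = K := by
      rcases hsec b with h | ⟨n, hn, h⟩
      · exact h
      · exact absurd (Ideal.mem_radical_iff.mpr ⟨n, (smul_submodule_eq_bot_iff _ K).mp h⟩) hb
    obtain ⟨n, hn⟩ := Ideal.mem_radical_iff.mp hab
    have hKK : (a * b) ^ n • K = K := by
      rw [mul_pow, mul_smul, pow_smul_eq_self hKb, pow_smul_eq_self hKa]
    exact hbot (hKK ▸ (smul_submodule_eq_bot_iff _ K).mpr hn)

theorem soc_le_of_ann_le {N K : Submodule R M}
    (hN : ∃ I : Ideal R, N = Submodule.torsionBySet R M (I : Set R))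
    (h : N.annihilator ≤ (soc R M K).annihilator) : soc R M K ≤ N := by
  obtain ⟨I, rfl⟩ := hN
  intro m hm
  rw [Submodule.mem_torsionBySet_iff]
  rintro ⟨a, haI⟩
  have haN : a ∈ (Submodule.torsionBySet R M (I : Set R)).annihilator := by
    rw [Submodule.mem_annihilator]
    intro x hx
    exact (Submodule.mem_torsionBySet_iff _ x).mp hx ⟨a, haI⟩
  exact Submodule.mem_annihilator.mp (h haN) m hm


theorem comultiplication_nuSStar_sup (hcomul : ∀ N : Submodule R M,
      ∃ I : Ideal R, N = Submodule.torsionBySet R M (I : Set R))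
    (N₁ N₂ : Submodule R M) :
    nuSStar R M (N₁ ⊔ N₂) = nuSStar R M N₁ ∪ nuSStar R M N₂ := by
  ext K
  constructor
  · rintro ⟨hK, hsoc⟩
    have hprime : K.annihilator.radical.IsPrime := radical_ann_prime hK.1
    have hinf : N₁.annihilator ⊓ N₂.annihilator ≤ (soc R M K).annihilator := by
      intro r hr
      rw [Submodule.mem_annihilator]
      intro m hm
      obtain ⟨y, hy, z, hz, rfl⟩ := Submodule.mem_sup.mp (hsoc hm)
      rw [smul_add, Submodule.mem_annihilator.mp hr.1 y hy,
        Submodule.mem_annihilator.mp hr.2 z hz, add_zero]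
    rw [hK.2] at hinf
    rcases (Ideal.IsPrime.inf_le hprime).mp hinf with h | h
    · exact Or.inl ⟨hK, soc_le_of_ann_le (hcomul N₁) (hK.2 ▸ h)⟩
    · exact Or.inr ⟨hK, soc_le_of_ann_le (hcomul N₂) (hK.2 ▸ h)⟩
  · rintro (⟨hK, h⟩ | ⟨hK, h⟩)
    · exact ⟨hK, h.trans le_sup_left⟩
    · exact ⟨hK, h.trans le_sup_right⟩
end

section
/- Let M be an R-module and N, N′ submodules. If √(Ann_R(N)) = √(Ann_R(N′)), then ν^s(N) = ν^s(N′). Conversely, if N, N′ ∈ Spec^L(M) and ν^s(N) = ν^s(N′), then √(Ann_R(N)) = √(Ann_R(N′)). -/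
open Pointwise

variable {R M : Type*} [CommRing R] [AddCommGroup M] [Module R M]

theorem nuS_eq_iff_radical_eq (N N' : Submodule R M) :
    (N.annihilator.radical = N'.annihilator.radical → nuS R M N = nuS R M N') ∧
    (N ∈ SpecL R M → N' ∈ SpecL R M → nuS R M N = nuS R M N' →
      N.annihilator.radical = N'.annihilator.radical) := by
  constructor
  · intro h
    have key : ∀ A B : Submodule R M, A.annihilator.radical = B.annihilator.radical →
        nuS R M A ⊆ nuS R M B := by
      intro A B hAB K hK
      exact ⟨hK.1, Ideal.radical_le_radical_iff.mp
        (hAB ▸ Ideal.radical_le_radical_iff.mpr hK.2)⟩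
    exact Set.Subset.antisymm (key N N' h) (key N' N h.symm)
  · intro hN hN' h
    have key : ∀ (A B : Submodule R M), A ∈ SpecL R M → nuS R M A = nuS R M B →
        B.annihilator.radical ≤ A.annihilator.radical := by
      intro A B hA hAB
      have hmem : A ∈ nuS R M A := ⟨hA, Ideal.le_radical⟩
      rw [hAB] at hmem
      exact Ideal.radical_le_radical_iff.mpr hmem.2
    exact le_antisymm (key N' N hN' h.symm) (key N N' hN h)
end

section
/- For any ideal I of an R-module M's base ring R, ν^s(Ann_M(I)) = ν^{s*}(Ann_M(I)) = ν^{s*}(Ann_M(√I)) = ν^s(Ann_M(√I)). -/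
open Pointwise

variable {R M : Type*} [CommRing R] [AddCommGroup M] [Module R M]

private lemma le_torsionBySet_iff (N : Submodule R M) (I : Ideal R) :
    N ≤ Submodule.torsionBySet R M (I : Set R) ↔ I ≤ N.annihilator := by
  constructor
  · intro h r hr
    rw [Submodule.mem_annihilator]
    intro n hn
    exact (Submodule.mem_torsionBySet_iff _ _).mp (h hn) ⟨r, hr⟩
  · intro h n hn
    rw [Submodule.mem_torsionBySet_iff]
    rintro ⟨r, hr⟩
    exact Submodule.mem_annihilator.mp (h hr) n hn

theorem nuS_torsionBySet_eq (I : Ideal R) :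
    nuS R M (Submodule.torsionBySet R M (I : Set R)) =
      nuSStar R M (Submodule.torsionBySet R M (I : Set R)) ∧
    nuSStar R M (Submodule.torsionBySet R M (I : Set R)) =
      nuSStar R M (Submodule.torsionBySet R M (I.radical : Set R)) ∧
    nuSStar R M (Submodule.torsionBySet R M (I.radical : Set R)) =
      nuS R M (Submodule.torsionBySet R M (I.radical : Set R)) := by
  have hIle : ∀ J : Ideal R,
      J ≤ (Submodule.torsionBySet R M (J : Set R)).annihilator := fun J =>
    (le_torsionBySet_iff _ J).mp le_rfl
  have h1 : ∀ J : Ideal R,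
      nuS R M (Submodule.torsionBySet R M (J : Set R)) =
        nuSStar R M (Submodule.torsionBySet R M (J : Set R)) := by
    intro J
    ext K
    refine ⟨fun ⟨hK, h⟩ => ⟨hK, ?_⟩, fun ⟨hK, h⟩ => ⟨hK, ?_⟩⟩
    · rw [le_torsionBySet_iff, hK.2]
      exact le_trans (hIle J) h
    · rw [← hK.2]
      exact Submodule.annihilator_mono h
  refine ⟨h1 I, ?_, (h1 I.radical).symm⟩
  ext K
  refine ⟨fun ⟨hK, h⟩ => ⟨hK, ?_⟩, fun ⟨hK, h⟩ => ⟨hK, ?_⟩⟩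
  · rw [le_torsionBySet_iff, hK.2] at h ⊢
    exact Ideal.radical_le_radical_iff.mpr h
  · rw [le_torsionBySet_iff, hK.2] at h ⊢
    exact le_trans Ideal.le_radical h
end

section
/- If N ∈ Spec^L(M), then ν^s(N) = ν^s(soc(N)). -/
open Pointwise

variable {R M : Type*} [CommRing R] [AddCommGroup M] [Module R M]

theorem nuS_eq_nuS_soc (N : Submodule R M) (hN : N ∈ SpecL R M) :
    nuS R M N = nuS R M (soc R M N) := by
  ext K
  simp only [nuS, Set.mem_setOf_eq, hN.2, and_congr_right_iff]
  intro _
  constructor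
  · intro h
    calc N.annihilator.radical ≤ K.annihilator.radical.radical :=
          Ideal.radical_mono h
      _ = K.annihilator.radical := Ideal.radical_idem _
  · intro h
    exact le_trans (Ideal.le_radical) h
end

section
/- For an R-module M and any ideal I of R containing Ann_R(M), the preimage under φ of the Zariski-closed set V(I/Ann_R(M)) in Spec(R/Ann_R(M)) equals ν^s(Ann_M(I)). Consequently, φ is continuous for the Zariski topologies. -/
open Pointwise

section Top
variable (R M : Type*) [CommRing R] [AddCommGroup M] [Module R M]

/-- The variety `ν^s(N)` viewed inside `Spec^L(M)`. -/
def nuS' (N : Submodule R M) : Set (SpecL R M) :=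
  {K | N.annihilator ≤ (K : Submodule R M).annihilator.radical}

/-- The Zariski (SL-) topology on `Spec^L(M)`, whose closed sets are the `ν^s(N)`. -/
instance SLTopology : TopologicalSpace (SpecL R M) :=
  TopologicalSpace.generateFrom {U | ∃ N : Submodule R M, U = (nuS' R M N)ᶜ}

/-- The basic open set `E_r = Spec^L(M) \\ ν^s(Ann_M(r))`. -/
def Eopen (r : R) : Set (SpecL R M) :=
  (nuS' R M (Submodule.torsionBy R M r))ᶜ

end Top

variable {R M : Type*} [CommRing R] [AddCommGroup M] [Module R M]

private lemma aux_preimage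
    (φ : SpecL R M → PrimeSpectrum (R ⧸ (⊤ : Submodule R M).annihilator))
    (hφ : ∀ K : SpecL R M, (φ K).asIdeal =
      Ideal.map (Ideal.Quotient.mk ((⊤ : Submodule R M).annihilator))
        (K : Submodule R M).annihilator.radical)
    (I : Ideal R) :
    φ ⁻¹' (PrimeSpectrum.zeroLocus
        ((Ideal.map (Ideal.Quotient.mk ((⊤ : Submodule R M).annihilator)) I : Ideal _) : Set _)) =
      nuS' R M (Submodule.torsionBySet R M (I : Set R)) := by
  ext K
  have hrad : (⊤ : Submodule R M).annihilator ≤ (K : Submodule R M).annihilator.radical :=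
    le_trans (Submodule.annihilator_mono le_top) Ideal.le_radical
  have hsoc : (soc R M (K : Submodule R M)).annihilator
      = (K : Submodule R M).annihilator.radical := K.2.2
  have hItors : I ≤ (Submodule.torsionBySet R M (I : Set R)).annihilator := by
    intro a ha
    rw [Submodule.mem_annihilator]
    intro m hm
    exact (Submodule.mem_torsionBySet_iff _ _).mp hm ⟨a, ha⟩
  simp only [Set.mem_preimage, PrimeSpectrum.mem_zeroLocus, SetLike.coe_subset_coe, hφ,
    Ideal.map_le_iff_le_comap]
  constructor
  · intro h
    have hIrad : I ≤ (K : Submodule R M).annihilator.radical := by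
      refine h.trans ?_
      rw [Ideal.comap_map_of_surjective _ Ideal.Quotient.mk_surjective, ← RingHom.ker_eq_comap_bot,
        Ideal.mk_ker]
      exact sup_le le_rfl hrad
    have hsubsoc : soc R M (K : Submodule R M) ≤ Submodule.torsionBySet R M (I : Set R) := by
      intro m hm
      rw [Submodule.mem_torsionBySet_iff]
      rintro ⟨a, ha⟩
      have : a ∈ (soc R M (K : Submodule R M)).annihilator := hsoc ▸ hIrad ha
      exact Submodule.mem_annihilator.mp this m hm
    exact (Submodule.annihilator_mono hsubsoc).trans hsoc.le
  · intro h
    exact ((hItors.trans h)).trans Ideal.le_comap_map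

theorem phi_preimage_zeroLocus_and_continuous
    (φ : SpecL R M → PrimeSpectrum (R ⧸ (⊤ : Submodule R M).annihilator))
    (hφ : ∀ K : SpecL R M, (φ K).asIdeal =
      Ideal.map (Ideal.Quotient.mk ((⊤ : Submodule R M).annihilator))
        (K : Submodule R M).annihilator.radical)
    (I : Ideal R) (hI : (⊤ : Submodule R M).annihilator ≤ I) :
    φ ⁻¹' (PrimeSpectrum.zeroLocus
        ((Ideal.map (Ideal.Quotient.mk ((⊤ : Submodule R M).annihilator)) I : Ideal _) : Set _)) =
      nuS' R M (Submodule.torsionBySet R M (I : Set R)) ∧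
    Continuous φ := by
  refine ⟨aux_preimage φ hφ I, ?_⟩
  rw [continuous_iff_isClosed]
  intro s hs
  obtain ⟨J, rfl⟩ := (PrimeSpectrum.isClosed_iff_zeroLocus_ideal s).mp hs
  have hmap : Ideal.map (Ideal.Quotient.mk ((⊤ : Submodule R M).annihilator))
      (Ideal.comap (Ideal.Quotient.mk ((⊤ : Submodule R M).annihilator)) J) = J :=
    Ideal.map_comap_of_surjective _ Ideal.Quotient.mk_surjective J
  rw [← hmap, aux_preimage φ hφ]
  rw [← isOpen_compl_iff]
  exact TopologicalSpace.GenerateOpen.basic _ ⟨_, rfl⟩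
end

section
/- Let f: M → M′ be an injective R-module homomorphism and N′ a submodule of M′ with N′ ⊆ f(M). If N′ ∈ Spec^L(M′), then f⁻¹(N′) ∈ Spec^L(M). -/
open Pointwise

variable {R M M' : Type*} [CommRing R] [AddCommGroup M] [Module R M]
  [AddCommGroup M'] [Module R M']

private lemma map_eq_bot_iff' (f : M →ₗ[R] M') (hf : Function.Injective f)
    (N : Submodule R M) : N.map f = ⊥ ↔ N = ⊥ := by
  constructor
  · intro h
    exact Submodule.map_injective_of_injective hf (by rw [h, Submodule.map_bot])
  · rintro rfl; exact Submodule.map_bot f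

private lemma map_ann (f : M →ₗ[R] M') (hf : Function.Injective f) (K : Submodule R M) :
    (K.map f).annihilator = K.annihilator := by
  ext r
  simp only [Submodule.mem_annihilator]
  constructor
  · intro h x hx
    have := h (f x) (Submodule.mem_map_of_mem hx)
    rw [← map_smul] at this
    exact hf (this.trans (map_zero f).symm)
  · rintro h y hy
    obtain ⟨x, hx, rfl⟩ := hy
    rw [← map_smul, h x hx, map_zero]

private lemma isSecond_map (f : M →ₗ[R] M') (hf : Function.Injective f)
    {S : Submodule R M} (h : IsSecond R M S) : IsSecond R M' (S.map f) := by
  refine ⟨fun hb => h.1 ((map_eq_bot_iff' f hf S).mp hb), fun r => ?_⟩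
  rcases h.2 r with hr | hr
  · left; rw [← Submodule.map_pointwise_smul, hr]
  · right; rw [← Submodule.map_pointwise_smul, hr, Submodule.map_bot]

private lemma isSecond_comap (f : M →ₗ[R] M') (hf : Function.Injective f)
    {S' : Submodule R M'} (hle : S' ≤ LinearMap.range f) (h : IsSecond R M' S') :
    IsSecond R M (S'.comap f) := by
  have hmc : (S'.comap f).map f = S' := Submodule.map_comap_eq_of_le hle
  have hinj := Submodule.map_injective_of_injective (f := f) hf
  refine ⟨fun hb => h.1 (by rw [← hmc, hb, Submodule.map_bot]), fun r => ?_⟩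
  rcases h.2 r with hr | hr
  · left
    apply hinj
    rw [Submodule.map_pointwise_smul, hmc, hr]
  · right
    apply hinj
    rw [Submodule.map_pointwise_smul, hmc, hr, Submodule.map_bot]

private lemma map_soc (f : M →ₗ[R] M') (hf : Function.Injective f)
    (N' : Submodule R M') (hle : N' ≤ LinearMap.range f) :
    (soc R M (N'.comap f)).map f = soc R M' N' := by
  have hmc : (N'.comap f).map f = N' := Submodule.map_comap_eq_of_le hle
  apply le_antisymm
  · rw [soc, (Submodule.gc_map_comap f).l_sSup]
    refine iSup₂_le fun S hS => ?_
    refine le_sSup ⟨isSecond_map f hf hS.1, ?_⟩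
    rw [← hmc]
    exact Submodule.map_mono hS.2
  · refine sSup_le fun S' hS' => ?_
    have hS'le : S' ≤ LinearMap.range f := hS'.2.trans hle
    have : (S'.comap f).map f = S' := Submodule.map_comap_eq_of_le hS'le
    rw [← this]
    refine Submodule.map_mono (le_sSup ⟨isSecond_comap f hf hS'le hS'.1, ?_⟩)
    exact Submodule.comap_mono hS'.2

theorem comap_mem_specL (f : M →ₗ[R] M') (hf : Function.Injective f)
    (N' : Submodule R M') (hle : N' ≤ LinearMap.range f) (hN' : N' ∈ SpecL R M') :
    N'.comap f ∈ SpecL R M := by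
  obtain ⟨⟨hne, hsec⟩, hann⟩ := hN'
  have hmc : (N'.comap f).map f = N' := Submodule.map_comap_eq_of_le hle
  have hinj := Submodule.map_injective_of_injective (f := f) hf
  constructor
  · constructor
    · intro hb
      exact hne (by rw [← hmc, hb, Submodule.map_bot])
    · intro r
      rcases hsec r with hr | ⟨n, hn, hrn⟩
      · left
        apply hinj
        rw [Submodule.map_pointwise_smul, hmc, hr]
      · right
        refine ⟨n, hn, hinj ?_⟩
        rw [Submodule.map_pointwise_smul, hmc, hrn, Submodule.map_bot]
  · calc (soc R M (N'.comap f)).annihilator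
        = ((soc R M (N'.comap f)).map f).annihilator := (map_ann f hf _).symm
      _ = (soc R M' N').annihilator := by rw [map_soc f hf N' hle]
      _ = N'.annihilator.radical := hann
      _ = ((N'.comap f).map f).annihilator.radical := by rw [hmc]
      _ = (N'.comap f).annihilator.radical := by rw [map_ann f hf]
end

section
/- For an R-module M and a, b ∈ R, E_a ∩ E_b = E_{ab}, where E_r = Spec^L(M) \ ν^s(Ann_M(r)). Moreover, if r is nilpotent then E_r = ∅, and if r is a unit then E_r = Spec^L(M). -/
open Pointwise

variable {R M : Type*} [CommRing R] [AddCommGroup M] [Module R M]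

section Aux

variable {R M : Type*} [CommRing R] [AddCommGroup M] [Module R M]

/-- If `a^n` annihilates `K` (i.e. `a ∈ rad Ann K`), then every second submodule of `K`
is killed by `a`, hence `soc K ≤ torsionBy a`. -/
lemma soc_le_torsionBy {K : Submodule R M} {a : R}
    (ha : a ∈ K.annihilator.radical) : soc R M K ≤ Submodule.torsionBy R M a := by
  obtain ⟨n, hn⟩ := Ideal.mem_radical_iff.mp ha
  have hkill : ∀ m ∈ K, a ^ n • m = 0 := Submodule.mem_annihilator.mp hn
  apply sSup_le
  rintro S ⟨⟨hS0, hS⟩, hSK⟩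
  rcases hS a with h | h
  · exfalso
    apply hS0
    have hpow : ∀ m : ℕ, a ^ m • S = S := by
      intro m
      induction m with
      | zero => simp
      | succ k ih => rw [pow_succ, mul_comm, mul_smul, ih, h]
    rw [Submodule.eq_bot_iff]
    intro s hs
    have : s ∈ a ^ n • S := (hpow n).symm ▸ hs
    obtain ⟨t, ht, rfl⟩ := Set.mem_smul_set.mp this
    exact hkill t (hSK ht)
  · intro s hs
    rw [Submodule.mem_torsionBy_iff]
    have : a • s ∈ a • S := Submodule.smul_mem_pointwise_smul s a S hs
    rw [h] at this
    simpa using this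

lemma ann_torsionBy_le {K : Submodule R M} (hK : K ∈ SpecL R M) {a : R}
    (ha : a ∈ K.annihilator.radical) :
    (Submodule.torsionBy R M a).annihilator ≤ K.annihilator.radical := by
  rw [← hK.2]
  exact Submodule.annihilator_mono (soc_le_torsionBy ha)

lemma mem_radical_or {K : Submodule R M} (hK : K ∈ SpecL R M) {a b : R}
    (hab : a * b ∈ K.annihilator.radical) :
    a ∈ K.annihilator.radical ∨ b ∈ K.annihilator.radical := by
  by_cases haK : a ∈ K.annihilator.radical
  · exact Or.inl haK
  · right
    obtain ⟨n, hn⟩ := Ideal.mem_radical_iff.mp hab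
    rcases hK.1.2 a with h | ⟨m, _, hm⟩
    · -- a • K = K, so a ^ n • K = K, hence b ^ n kills K
      have hpow : ∀ m : ℕ, a ^ m • K = K := by
        intro m
        induction m with
        | zero => simp
        | succ k ih => rw [pow_succ, mul_comm, mul_smul, ih, h]
      refine Ideal.mem_radical_iff.mpr ⟨n, Submodule.mem_annihilator.mpr fun x hx => ?_⟩
      have hx' : x ∈ a ^ n • K := (hpow n).symm ▸ hx
      obtain ⟨t, ht, rfl⟩ := Set.mem_smul_set.mp hx'
      have := Submodule.mem_annihilator.mp hn t ht
      rw [mul_pow] at this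
      rw [smul_smul, mul_comm]
      exact this
    · exfalso
      apply haK
      refine Ideal.mem_radical_iff.mpr ⟨m, Submodule.mem_annihilator.mpr fun x hx => ?_⟩
      have : a ^ m • x ∈ a ^ m • K := Submodule.smul_mem_pointwise_smul x _ K hx
      rw [hm] at this
      simpa using this

lemma radical_ne_top {K : Submodule R M} (hK0 : K ≠ ⊥) :
    K.annihilator.radical ≠ ⊤ := by
  intro h
  apply hK0
  have : (1 : R) ∈ K.annihilator.radical := h ▸ Submodule.mem_top
  obtain ⟨n, hn⟩ := Ideal.mem_radical_iff.mp this
  rw [one_pow] at hn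
  rw [Submodule.eq_bot_iff]
  intro x hx
  simpa using Submodule.mem_annihilator.mp hn x hx

end Aux

theorem Eopen_inter_and_special (a b r : R) :
    Eopen R M a ∩ Eopen R M b = Eopen R M (a * b) ∧
    (IsNilpotent r → Eopen R M r = ∅) ∧
    (IsUnit r → Eopen R M r = Set.univ) := by
  refine ⟨?_, ?_, ?_⟩
  · ext K
    simp only [Eopen, nuS', Set.mem_inter_iff, Set.mem_compl_iff, Set.mem_setOf_eq]
    constructor
    · rintro ⟨hA, hB⟩ hAB
      have hab : a * b ∈ (K : Submodule R M).annihilator.radical :=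
        hAB (Submodule.mem_annihilator.mpr fun m hm => (Submodule.mem_torsionBy_iff _ _).mp hm)
      rcases mem_radical_or K.2 hab with h | h
      · exact hA (ann_torsionBy_le K.2 h)
      · exact hB (ann_torsionBy_le K.2 h)
    · intro hAB
      have hle : ∀ c d : R, Submodule.torsionBy R M c ≤ Submodule.torsionBy R M (c * d) := by
        intro c d m hm
        rw [Submodule.mem_torsionBy_iff] at hm ⊢
        rw [mul_comm, mul_smul, hm, smul_zero]
      constructor
      · exact fun h => hAB ((Submodule.annihilator_mono (hle a b)).trans h)
      · exact fun h => hAB ((Submodule.annihilator_mono ((mul_comm a b ▸ hle b a))).trans h)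
  · rintro ⟨n, hn⟩
    rw [Set.eq_empty_iff_forall_notMem]
    intro K hK
    apply hK
    have hr : r ∈ (K : Submodule R M).annihilator.radical :=
      Ideal.mem_radical_iff.mpr ⟨n, by rw [hn]; exact (K : Submodule R M).annihilator.zero_mem⟩
    exact ann_torsionBy_le K.2 hr
  · intro hr
    rw [Set.eq_univ_iff_forall]
    intro K
    intro h
    have ht : Submodule.torsionBy R M r = ⊥ := by
      rw [Submodule.eq_bot_iff]
      intro x hx
      rw [Submodule.mem_torsionBy_iff] at hx
      obtain ⟨u, hu⟩ := hr
      calc x = u.inv • (r • x) := by rw [← hu]; simp [smul_smul, ← mul_smul]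
        _ = 0 := by rw [hx, smul_zero]
    simp only [nuS', Set.mem_setOf_eq, ht, Submodule.annihilator_bot, top_le_iff] at h
    exact radical_ne_top (K.2.1.1) h
end

section
/- For K ∈ Spec^L(M), the closure of the singleton {K} in the SL-topology is ν^s(K), and ν^s(K) is an irreducible closed subset of Spec^L(M). In particular, if M ∈ Spec^L(M) then Spec^L(M) is irreducible. -/
open Pointwise

variable {R M : Type*} [CommRing R] [AddCommGroup M] [Module R M]

theorem closure_singleton_eq_nuS' (K : SpecL R M) :
    closure {K} = nuS' R M (K : Submodule R M) ∧
    IsIrreducible (nuS' R M (K : Submodule R M)) ∧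
    ((⊤ : Submodule R M) ∈ SpecL R M →
      IsIrreducible (Set.univ : Set (SpecL R M))) := by
  have hclosed : ∀ N : Submodule R M, IsClosed (nuS' R M N) := fun N => by
    rw [← isOpen_compl_iff]
    exact TopologicalSpace.isOpen_generateFrom_of_mem ⟨N, rfl⟩
  have hcl : ∀ K : SpecL R M, closure {K} = nuS' R M (K : Submodule R M) := by
    intro K
    apply le_antisymm
    · refine closure_minimal ?_ (hclosed _)
      intro x hx
      rw [Set.mem_singleton_iff] at hx
      subst hx
      exact Ideal.le_radical
    · intro L hL
      rw [mem_closure_iff]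
      intro U hU hLU
      refine ⟨K, ?_, rfl⟩
      have hU' : TopologicalSpace.GenerateOpen
          {U | ∃ N : Submodule R M, U = (nuS' R M N)ᶜ} U := hU
      clear hU
      revert hLU
      induction hU' with
      | basic V hV =>
        obtain ⟨N, rfl⟩ := hV
        intro hLU hK
        exact hLU (le_trans hK (le_trans (Ideal.radical_mono hL)
          (Ideal.radical_idem _).le))
      | univ => exact fun _ => trivial
      | inter s t hs ht ihs iht => exact fun h => ⟨ihs h.1, iht h.2⟩
      | sUnion S hS ih =>
        rintro ⟨s, hs, hLs⟩
        exact ⟨s, hs, ih s hs hLs⟩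
  refine ⟨hcl K, ?_, ?_⟩
  · rw [← hcl K]
    exact isIrreducible_singleton.closure
  · intro hT
    have huniv : nuS' R M ((⟨⊤, hT⟩ : SpecL R M) : Submodule R M) = Set.univ := by
      ext L
      simp only [Set.mem_univ, iff_true]
      exact le_trans (Submodule.annihilator_mono le_top) Ideal.le_radical
    rw [← huniv, ← hcl ⟨⊤, hT⟩]
    exact isIrreducible_singleton.closure
end
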